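/- arXiv:1504.05932 — 3 statements merged into one kernel-verified Lean document; each statement's English description precedes it below -/
import Mathlib

section
/- Let f be a strategy-proof and non-bossy allocation mechanism over a basic categorized domain. For any profile P, any agent j, any bundle d, and any linear order R_j' that is a pushup of d from R_j, either f(R_j', R_{-j}) = f(P) or f^j(R_j', R_{-j}) = d. -/
/-- A bundle in a basic categorized domain: one item (from `Fin n`) per category (`Fin p`). -/
abbrev Bundle (n p : ℕ) := Fin p → Fin n

/-- A preference: a binary relation on bundles (`R a b` means `a` is strictly preferred to `b`). -/
abbrev Pref (n p : ℕ) := Bundle n p → Bundle n p → Prop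

/-- A profile assigns a preference to each of the `n` agents. -/
abbrev Profile (n p : ℕ) := Fin n → Pref n p

/-- An allocation mechanism: maps a profile to the bundle of each agent. -/
abbrev Mechanism (n p : ℕ) := Profile n p → Fin n → Bundle n p

/-- All preferences in the profile are strict linear orders. -/
def ValidProfile {n p : ℕ} (P : Profile n p) : Prop :=
  ∀ j, IsStrictTotalOrder (Bundle n p) (P j)

/-- A valid allocation: in every category, no item is given to two agents. -/
def ValidAlloc {n p : ℕ} (A : Fin n → Bundle n p) : Prop :=
  ∀ i : Fin p, Function.Injective fun j => A j i

/-- Strategy-proofness: no agent can get a strictly better bundle by misreporting. -/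
def StrategyProof {n p : ℕ} (f : Mechanism n p) : Prop :=
  ∀ P : Profile n p, ValidProfile P → ∀ j : Fin n, ∀ R' : Pref n p,
    IsStrictTotalOrder (Bundle n p) R' →
    f P j = f (Function.update P j R') j ∨ P j (f P j) (f (Function.update P j R') j)

/-- Non-bossiness: an agent cannot change others' bundles without changing her own. -/
def NonBossy {n p : ℕ} (f : Mechanism n p) : Prop :=
  ∀ P : Profile n p, ValidProfile P → ∀ j : Fin n, ∀ R' : Pref n p,
    IsStrictTotalOrder (Bundle n p) R' →
    f P j = f (Function.update P j R') j → f P = f (Function.update P j R')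

/-- Relabel a bundle by permuting the items of category `i` by `M`. -/
def relabel {n p : ℕ} (i : Fin p) (M : Fin n ≃ Fin n) (d : Bundle n p) : Bundle n p :=
  Function.update d i (M (d i))

/-- The preference induced on relabeled bundles. -/
def permPref {n p : ℕ} (i : Fin p) (M : Fin n ≃ Fin n) (R : Pref n p) : Pref n p :=
  fun a b => R (relabel i M.symm a) (relabel i M.symm b)

/-- Category-wise neutrality: permuting the items of one category permutes the allocation. -/
def CatNeutral {n p : ℕ} (f : Mechanism n p) : Prop :=
  ∀ P : Profile n p, ValidProfile P → ∀ (i : Fin p) (M : Fin n ≃ Fin n) (j : Fin n),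
    f (fun j' => permPref i M (P j')) j = relabel i M (f P j)

/-- Pareto optimality of a mechanism. -/
def ParetoOptimal {n p : ℕ} (f : Mechanism n p) : Prop :=
  ∀ P : Profile n p, ValidProfile P →
    ¬ ∃ A : Fin n → Bundle n p, ValidAlloc A ∧
      (∀ j, A j = f P j ∨ P j (A j) (f P j)) ∧ (∃ j, P j (A j) (f P j))

/-- `R'` is a pushup of `d` from `R`: relative order of other bundles unchanged,
and the set of bundles above `d` only shrinks. -/
def Pushup {n p : ℕ} (d : Bundle n p) (R R' : Pref n p) : Prop :=
  (∀ a b, a ≠ d → b ≠ d → (R' a b ↔ R a b)) ∧ (∀ a, R' a d → R a d)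

/-- `A` is the serial-dictatorship allocation for profile `P` and agent order `K`
(`K t` is the agent acting at step `t`): each dictator's bundle avoids earlier dictators'
items and is preferred to every other bundle avoiding earlier dictators' items. -/
def IsSDAlloc {n p : ℕ} (P : Profile n p) (K : Fin n ≃ Fin n) (A : Fin n → Bundle n p) : Prop :=
  ∀ t : Fin n,
    (∀ s : Fin n, s < t → ∀ i, A (K s) i ≠ A (K t) i) ∧
    (∀ b : Bundle n p, (∀ s : Fin n, s < t → ∀ i, A (K s) i ≠ b i) →
      b ≠ A (K t) → P (K t) (A (K t)) b)

/-- `f` is a serial dictatorship. -/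
def SerialDict {n p : ℕ} (f : Mechanism n p) : Prop :=
  ∃ K : Fin n ≃ Fin n, ∀ P : Profile n p, ValidProfile P → IsSDAlloc P K (f P)

/-!
If agent `j`'s bundle changes when she switches from `R_j` to the pushup `R_j'`, strategy-proofness
applied in both directions says that `R_j` ranks the old bundle above the new one while `R_j'`
ranks the new one above the old one. A pushup of `d` reverses no pair except by raising `d`, so
the new bundle is `d`. If her bundle does not change, non-bossiness says nothing changes.
-/

open Function

theorem ValidProfile.update {n p : ℕ} {P : Profile n p} (hP : ValidProfile P) (j : Fin n)
    {R' : Pref n p} (hR' : IsStrictTotalOrder (Bundle n p) R') :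
    ValidProfile (update P j R') := by
  intro k
  by_cases hk : k = j
  · subst hk
    simpa using hR'
  · simpa [update_of_ne hk] using hP k

theorem Pushup.eq_of_rel_of_rel_swap {n p : ℕ} {d a b : Bundle n p} {R R' : Pref n p}
    (hpush : Pushup d R R') [Std.Asymm R] (hab : R a b) (hba : R' b a) : b = d := by
  by_contra hbd
  by_cases had : a = d
  · subst had
    exact asymm hab (hpush.2 b hba)
  · exact asymm hab ((hpush.1 b a hbd had).mp hba)

theorem StrategyProof.rel_and_rel_swap_of_ne {n p : ℕ} {f : Mechanism n p} (hSP : StrategyProof f)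
    {P : Profile n p} (hP : ValidProfile P) {j : Fin n} {R' : Pref n p}
    (hR' : IsStrictTotalOrder (Bundle n p) R') (hne : f (update P j R') j ≠ f P j) :
    P j (f P j) (f (update P j R') j) ∧ R' (f (update P j R') j) (f P j) := by
  have hback := hSP _ (hP.update j hR') j (P j) (hP j)
  simp only [update_idem, update_eq_self, update_self] at hback
  exact ⟨(hSP P hP j R' hR').resolve_left hne.symm, hback.resolve_left hne⟩

theorem statement2 (n p : ℕ) (f : Mechanism n p)
    (hSP : StrategyProof f) (hNB : NonBossy f)
    (P : Profile n p) (hP : ValidProfile P) (j : Fin n) (d : Bundle n p)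
    (R' : Pref n p) (hR' : IsStrictTotalOrder (Bundle n p) R')
    (hpush : Pushup d (P j) R') :
    f (Function.update P j R') = f P ∨ f (Function.update P j R') j = d := by
  by_cases hsame : f (update P j R') j = f P j
  · exact Or.inl (hNB P hP j R' hR' hsame.symm).symm
  · obtain ⟨hold, hnew⟩ := hSP.rel_and_rel_swap_of_ne hP hR' hsame
    have := hP j
    exact Or.inr (hpush.eq_of_rel_of_rel_swap hold hnew)
end

section
/- In a categorial sequential allocation mechanism, if agent j is pessimistic then for every profile the rank of the bundle allocated to her is at most n^p − ∑_{l=1}^{p} (k_{j, O_j(l)} − 1); equivalently, her bundle is ranked no lower than the (1 + ∑_{l=1}^{p}(k_{j,O_j(l)} − 1))-th position from the bottom of her preference order over the n^p bundles. -/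
open scoped Classical

/-- A categorial sequential allocation mechanism: a linear order over agent–category
pairs, i.e. a bijection from rounds `Fin (n*p)` to pairs. -/
abbrev Csam (n p : ℕ) := Fin (n * p) ≃ Fin n × Fin p

/-- The rank of bundle `b` in preference `R` (1 = best, `n^p` = worst). -/
noncomputable def rank {n p : ℕ} (R : Pref n p) (b : Bundle n p) : ℕ :=
  1 + (Finset.univ.filter fun c => R c b).card

/-- `kval O j i`: the number of category-`i` items still available when agent `j`
picks from category `i` (depends only on `O`). -/
def kval {n p : ℕ} (O : Csam n p) (j : Fin n) (i : Fin p) : ℕ :=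
  1 + (Finset.univ.filter fun j' : Fin n => O.symm (j, i) < O.symm (j', i)).card

/-- `Oj O j l`: the `l`-th category (0-based) that agent `j` visits in `O`. -/
noncomputable def Oj {n p : ℕ} (O : Csam n p) (j : Fin n) (l : Fin p) : Fin p :=
  (O ((Finset.univ.image fun i : Fin p => O.symm (j, i)).orderIsoOfFin
      (by
        rw [Finset.card_image_of_injective _
          (fun a b h => congrArg Prod.snd (O.symm.injective h))]
        simp) l).1).2

/-- `NoInterruptF O j K`: for every later position `l > K` of agent `j`, no other agent
picks from category `Oj O j l` between agent `j`'s pick in category `Oj O j K`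
and her pick in category `Oj O j l`. -/
def NoInterruptF {n p : ℕ} (O : Csam n p) (j : Fin n) (K : ℕ) : Prop :=
  ∀ lK : Fin p, (lK : ℕ) = K → ∀ l : Fin p, lK < l → ∀ j' : Fin n, j' ≠ j →
    ¬ (O.symm (j, Oj O j lK) < O.symm (j', Oj O j l) ∧
       O.symm (j', Oj O j l) < O.symm (j, Oj O j l))

/-- `Kval O j`: the smallest (0-based) index `K` such that agent `j` is not interrupted
from position `K` onwards. -/
noncomputable def Kval {n p : ℕ} (O : Csam n p) (j : Fin n) : ℕ :=
  sInf {K : ℕ | K < p ∧ NoInterruptF O j K}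

/-- Item `d` of category `i` is still available at round `t` under final allocation `A`. -/
def availAt {n p : ℕ} (O : Csam n p) (A : Fin n → Bundle n p) (t : Fin (n * p))
    (i : Fin p) (d : Fin n) : Prop :=
  ∀ j' : Fin n, O.symm (j', i) < t → A j' i ≠ d

/-- Bundle `b` is still achievable by agent `j` at round `t`: it agrees with her previous
choices and all remaining components are still available. -/
def achievable {n p : ℕ} (O : Csam n p) (A : Fin n → Bundle n p) (j : Fin n)
    (t : Fin (n * p)) (b : Bundle n p) : Prop :=
  (∀ c : Fin p, O.symm (j, c) < t → b c = A j c) ∧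
  (∀ c : Fin p, ¬ O.symm (j, c) < t → availAt O A t c (b c))

/-- Agent `j` plays optimistically in the run producing allocation `A`: at each of her
rounds she picks the item of her top-ranked still-achievable bundle. -/
def OptPlays {n p : ℕ} (O : Csam n p) (P : Profile n p) (A : Fin n → Bundle n p)
    (j : Fin n) : Prop :=
  ∀ i : Fin p, ∃ b : Bundle n p, achievable O A j (O.symm (j, i)) b ∧
    (∀ b' : Bundle n p, achievable O A j (O.symm (j, i)) b' → b' ≠ b → P j b b') ∧
    A j i = b i

/-- Agent `j` plays pessimistically in the run producing `A`: at each of her rounds, for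
every available alternative item `d'`, some achievable bundle with component `d'` is worse
than every achievable bundle with the component she actually chose. -/
def PesPlays {n p : ℕ} (O : Csam n p) (P : Profile n p) (A : Fin n → Bundle n p)
    (j : Fin n) : Prop :=
  ∀ i : Fin p, ∀ d' : Fin n, availAt O A (O.symm (j, i)) i d' → d' ≠ A j i →
    ∃ w' : Bundle n p, achievable O A j (O.symm (j, i)) w' ∧ w' i = d' ∧
      ∀ w : Bundle n p, achievable O A j (O.symm (j, i)) w → w i = A j i → P j w w'

/-- `∏_{l = K_j}^{p} k_{j, O_j(l)}`. -/
noncomputable def optProd {n p : ℕ} (O : Csam n p) (j : Fin n) : ℕ :=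
  ∏ l ∈ Finset.univ.filter (fun l : Fin p => Kval O j ≤ (l : ℕ)), kval O j (Oj O j l)

/-- `∑_{l = 1}^{p} (k_{j, O_j(l)} - 1)`. -/
noncomputable def pesSum {n p : ℕ} (O : Csam n p) (j : Fin n) : ℕ :=
  ∑ l : Fin p, (kval O j (Oj O j l) - 1)

/-!
Every available item `d ≠ A j i` that agent `j` passed over in category `i` comes, by
pessimism, with a still-achievable bundle `w` with `w i = d` that is worse than her final bundle.
These witnesses are pairwise distinct: two of them for the same category differ there, and a
witness for a later pick of `j` agrees with `A j` on every earlier category. Since the agents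
picking after `j` in category `i` receive pairwise distinct such alternatives, at least
`∑ (k_{j,i} - 1)` bundles lie strictly below `A j`.
-/

open Finset

variable {n p : ℕ}

theorem card_filter_rel_add_card_filter_rel_lt {α : Type*} [Fintype α] (r : α → α → Prop)
    [Std.Asymm r] (a : α) :
    #{c | r c a} + #{c | r a c} < Fintype.card α := by
  set better : Finset α := {c | r c a}
  set worse : Finset α := {c | r a c}
  have hdisj : Disjoint better worse :=
    disjoint_filter.mpr fun _ _ hca hac => asymm_of r hca hac
  have hnotin : a ∉ better ∪ worse := by
    simp [better, worse, irrefl_of r a]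
  have := card_le_univ (insert a (better ∪ worse))
  rw [card_insert_of_notMem hnotin, card_union_of_disjoint hdisj] at this
  omega

theorem rank_add_card_worse_le (R : Pref n p) [Std.Asymm R] (b : Bundle n p) :
    rank R b + #{c | R b c} ≤ n ^ p := by
  have := card_filter_rel_add_card_filter_rel_lt R b
  simp only [Fintype.card_fun, Fintype.card_fin] at this
  unfold rank
  omega

def pickRounds (O : Csam n p) (j : Fin n) : Finset (Fin (n * p)) :=
  univ.image fun i : Fin p => O.symm (j, i)

theorem card_pickRounds (O : Csam n p) (j : Fin n) : #(pickRounds O j) = p := by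
  rw [pickRounds, card_image_of_injective _
    (fun a b h => congrArg Prod.snd (O.symm.injective h))]
  simp

theorem symm_Oj (O : Csam n p) (j : Fin n) (l : Fin p) :
    O.symm (j, Oj O j l) = (pickRounds O j).orderIsoOfFin (card_pickRounds O j) l := by
  obtain ⟨i, -, hi⟩ := mem_image.mp ((pickRounds O j).orderIsoOfFin (card_pickRounds O j) l).2
  show O.symm (j, (O ((pickRounds O j).orderIsoOfFin (card_pickRounds O j) l : Fin (n * p))).2) = _
  rw [← hi, Equiv.apply_symm_apply]

theorem Oj_bijective (O : Csam n p) (j : Fin n) : Function.Bijective (Oj O j) := by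
  refine Finite.injective_iff_bijective.mp fun l l' h => ?_
  simpa only [symm_Oj, Subtype.coe_inj, EmbeddingLike.apply_eq_iff_eq] using
    congrArg (fun i => O.symm (j, i)) h

theorem pesSum_eq_sum (O : Csam n p) (j : Fin n) :
    pesSum O j = ∑ i, (kval O j i - 1) :=
  (Oj_bijective O j).sum_comp fun i => kval O j i - 1

section Pessimist

variable (O : Csam n p) (A : Fin n → Bundle n p) (j : Fin n)

noncomputable def alternatives (i : Fin p) : Finset (Fin n) :=
  {d | availAt O A (O.symm (j, i)) i d ∧ d ≠ A j i}

variable {O A}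

theorem achievable_self (hA : ValidAlloc A) (t : Fin (n * p)) : achievable O A j t (A j) := by
  refine ⟨fun _ _ => rfl, fun c hc j' hj' heq => hc ?_⟩
  rwa [← hA c heq]

/-- The agents picking after `j` in category `i` are `k_{j,i} - 1` in number and receive
distinct alternatives of `j`. -/
theorem kval_sub_one_le_card_alternatives (hA : ValidAlloc A) (i : Fin p) :
    kval O j i - 1 ≤ #(alternatives O A j i) := by
  have hmaps : Set.MapsTo (fun j' => A j' i)
      ({j' | O.symm (j, i) < O.symm (j', i)} : Finset (Fin n)) (alternatives O A j i) := by
    intro j' hj'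
    replace hj' : O.symm (j, i) < O.symm (j', i) := by simpa using hj'
    refine mem_filter.mpr ⟨mem_univ _, fun j'' hj'' heq => ?_, fun heq => ?_⟩
    · rw [hA i heq] at hj''
      exact lt_asymm hj' hj''
    · rw [hA i heq] at hj'
      exact lt_irrefl _ hj'
  have := card_le_card_of_injOn _ hmaps (hA i).injOn
  unfold kval
  omega

theorem exists_worse_witness (P : Profile n p) (hA : ValidAlloc A) (hpes : PesPlays O P A j)
    (i : Fin p) (d : Fin n) (hd : d ∈ alternatives O A j i) :
    ∃ w, achievable O A j (O.symm (j, i)) w ∧ w i = d ∧ P j (A j) w := by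
  obtain ⟨hav, hne⟩ := (mem_filter.mp hd).2
  obtain ⟨w, hach, hwi, hworse⟩ := hpes i d hav hne
  exact ⟨w, hach, hwi, hworse _ (achievable_self j hA _) rfl⟩

theorem injOn_witnesses {w : Fin p → Fin n → Bundle n p}
    (hw : ∀ i, ∀ d ∈ alternatives O A j i,
      achievable O A j (O.symm (j, i)) (w i d) ∧ w i d i = d) :
    Set.InjOn (fun x : (_ : Fin p) × Fin n => w x.1 x.2) (univ.sigma (alternatives O A j)) := by
  have hearlier : ∀ {i d i' d'}, d ∈ alternatives O A j i → d' ∈ alternatives O A j i' →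
      O.symm (j, i) < O.symm (j, i') → w i d ≠ w i' d' := by
    intro i d i' d' hd hd' hlt heq
    have hagree : w i' d' i = A j i := (hw _ _ hd').1.1 _ hlt
    rw [← heq, (hw _ _ hd).2] at hagree
    exact (mem_filter.mp hd).2.2 hagree
  rintro ⟨i, d⟩ hd ⟨i', d'⟩ hd' heq
  replace hd := (mem_sigma.mp hd).2
  replace hd' := (mem_sigma.mp hd').2
  obtain rfl | hii' := eq_or_ne i i'
  · have := congrFun heq i
    simp only [(hw _ _ hd).2, (hw _ _ hd').2] at this
    rw [this]
  · have hround : O.symm (j, i) ≠ O.symm (j, i') := fun h =>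
      hii' (congrArg Prod.snd (O.symm.injective h))
    rcases hround.lt_or_gt with hlt | hgt
    · exact absurd heq (hearlier hd hd' hlt)
    · exact absurd heq.symm (hearlier hd' hd hgt)

theorem pesSum_le_card_worse (P : Profile n p) (hA : ValidAlloc A) (hpes : PesPlays O P A j) :
    pesSum O j ≤ #{c | P j (A j) c} := by
  choose! w hach hwi hworse using exists_worse_witness j P hA hpes
  have hmaps : Set.MapsTo (fun x : (_ : Fin p) × Fin n => w x.1 x.2)
      (univ.sigma (alternatives O A j)) ↑({c | P j (A j) c} : Finset (Bundle n p)) :=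
    fun x hx => by simpa using hworse _ _ (mem_sigma.mp hx).2
  calc pesSum O j = ∑ i, (kval O j i - 1) := pesSum_eq_sum O j
    _ ≤ ∑ i, #(alternatives O A j i) :=
        sum_le_sum fun i _ => kval_sub_one_le_card_alternatives j hA i
    _ = #(univ.sigma (alternatives O A j)) := (card_sigma _ _).symm
    _ ≤ #{c | P j (A j) c} :=
        card_le_card_of_injOn _ hmaps
          (injOn_witnesses j fun i d hd => ⟨hach i d hd, hwi i d hd⟩)

end Pessimist

theorem statement8_general (n p : ℕ) (O : Csam n p)
    (P : Profile n p) (hP : ValidProfile P)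
    (A : Fin n → Bundle n p) (hA : ValidAlloc A)
    (isOpt : Fin n → Bool)
    (hplay : ∀ j : Fin n, (isOpt j = true → OptPlays O P A j) ∧
      (isOpt j = false → PesPlays O P A j))
    (j : Fin n) (hj : isOpt j = false) :
    rank (P j) (A j) ≤ n ^ p - pesSum O j := by
  have := hP j
  have hworse := pesSum_le_card_worse j P hA ((hplay j).2 hj)
  have hcount := rank_add_card_worse_le (P j) (A j)
  omega

theorem statement8 (n p : ℕ) (hn : 0 < n) (hp : 0 < p) (O : Csam n p)
    (P : Profile n p) (hP : ValidProfile P)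
    (A : Fin n → Bundle n p) (hA : ValidAlloc A)
    (isOpt : Fin n → Bool)
    (hplay : ∀ j : Fin n, (isOpt j = true → OptPlays O P A j) ∧
      (isOpt j = false → PesPlays O P A j))
    (j : Fin n) (hj : isOpt j = false) :
    rank (P j) (A j) ≤ n ^ p - pesSum O j :=
  statement8_general n p O P hP A hA isOpt hplay j hj
end

section
/- Suppose all agents are strategic with complete and perfect information, and a CSAM f_O is played as an extensive-form game with the unique subgame-perfect Nash equilibrium outcome. Then for every agent j and every profile, the rank of the bundle allocated to agent j in the SPNE is at most n^p + 1 − ∏_{i=1}^{p} k_{j,i}. -/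
open scoped Classical

/-- In history `h`, item `d` of category `i` is available at round `t`: no earlier round
assigned to category `i` chose `d`. -/
def availH {n p : ℕ} (O : Csam n p) (h : Fin (n * p) → Fin n) (t : ℕ) (i : Fin p)
    (d : Fin n) : Prop :=
  ∀ t' : Fin (n * p), (t' : ℕ) < t → (O t').2 = i → h t' ≠ d

/-- `F` is a backward-induction (SPNE) outcome function for the extensive-form game of
the CSAM `O` under profile `P`: `F t h` is the final allocation of the subgame starting at
round `t` with history `h` (choices at rounds `< t`); at a leaf it reads off the history,
and at each node the active agent picks an available item whose continuation she weakly
prefers to that of every other available item. -/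
def BIOutcome {n p : ℕ} (O : Csam n p) (P : Profile n p)
    (F : ℕ → (Fin (n * p) → Fin n) → Fin n → Bundle n p) : Prop :=
  (∀ h : Fin (n * p) → Fin n, ∀ j : Fin n, ∀ i : Fin p, F (n * p) h j i = h (O.symm (j, i))) ∧
  (∀ t : ℕ, ∀ ht : t < n * p, ∀ h : Fin (n * p) → Fin n,
    ∃ d : Fin n, availH O h t (O ⟨t, ht⟩).2 d ∧
      F t h = F (t + 1) (Function.update h ⟨t, ht⟩ d) ∧
      ∀ d' : Fin n, availH O h t (O ⟨t, ht⟩).2 d' → d' ≠ d →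
        ((F (t + 1) (Function.update h ⟨t, ht⟩ d)) (O ⟨t, ht⟩).1 =
            (F (t + 1) (Function.update h ⟨t, ht⟩ d')) (O ⟨t, ht⟩).1) ∨
          P (O ⟨t, ht⟩).1
            ((F (t + 1) (Function.update h ⟨t, ht⟩ d)) (O ⟨t, ht⟩).1)
            ((F (t + 1) (Function.update h ⟨t, ht⟩ d')) (O ⟨t, ht⟩).1))

/-!
Backward induction over the rounds. At a node `(t, h)` of the game, for a category `i` that agent
`j` has not yet picked from, the items of `i` still free at round `t`, minus the other agents who
pick from `i` between round `t` and `j`'s own turn, remain available to `j` whatever is played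
(`guaranteed`). Among the bundles compatible with `j`'s past picks, at least the product of these
guarantees over her remaining categories are not preferred by `j` to her subgame outcome: at her
own turn in category `i₀`, each free item `e` contributes, by induction, that many such bundles
with `i₀`-component `e`, because she weakly prefers her actual outcome to the outcome after
choosing `e`. At the root the guarantees are the `k_{j,i}`, so at least `∏ k_{j,i}` bundles are not
better than `j`'s equilibrium bundle, which bounds its rank.
-/

section BackwardInduction

open Finset Function

variable {n p : ℕ}

lemma card_mul_le_card_of_le_card_fiber {α β : Type*} [Fintype β] [DecidableEq β]
    {T : Finset α} {f : α → β} {A : Finset β} {Q : ℕ}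
    (hQ : ∀ b ∈ A, Q ≤ #{a ∈ T | f a = b}) : #A * Q ≤ #T :=
  calc #A * Q = ∑ _b ∈ A, Q := by rw [sum_const, smul_eq_mul]
    _ ≤ ∑ b ∈ A, #{a ∈ T | f a = b} := sum_le_sum hQ
    _ ≤ ∑ b, #{a ∈ T | f a = b} := sum_le_sum_of_subset (subset_univ A)
    _ = #T := (card_eq_sum_card_fiberwise fun _ _ => mem_coe.2 (mem_univ _)).symm

lemma card_filter_lt_add_card_filter_gt {ι α : Type*} [Fintype ι] [LinearOrder α] {f : ι → α}
    (hf : Injective f) (j : ι) :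
    #{x | f x < f j} + #{x | f j < f x} + 1 = Fintype.card ι := by
  have hunion : ({x | f x < f j} : Finset ι) ∪ ({x | f j < f x} : Finset ι) = univ.erase j := by
    ext x
    simp [hf.ne_iff]
  rw [← card_union_of_disjoint (disjoint_filter.2 fun _ _ h1 h2 => lt_asymm h1 h2), hunion,
    card_erase_of_mem (mem_univ j), card_univ]
  have := Fintype.card_pos_iff.2 ⟨j⟩
  omega

lemma rank_add_card_filter_not (R : Pref n p) (b : Bundle n p) :
    rank R b + #{c | ¬ R c b} = n ^ p + 1 := by
  have := card_filter_add_card_filter_not (s := univ) (fun c => R c b)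
  simp only [card_univ, Fintype.card_fun, Fintype.card_fin] at this
  rw [rank]
  omega

lemma Csam.symm_val_eq_iff (O : Csam n p) {t : ℕ} (ht : t < n * p) (j : Fin n) (i : Fin p) :
    (O.symm (j, i) : ℕ) = t ↔ O ⟨t, ht⟩ = (j, i) := by
  rw [eq_comm (a := O ⟨t, ht⟩), ← Equiv.symm_apply_eq, Fin.ext_iff]

lemma availH_update_succ (O : Csam n p) (h : Fin (n * p) → Fin n) {t : ℕ} (ht : t < n * p)
    (d : Fin n) (i : Fin p) (e : Fin n) :
    availH O (update h ⟨t, ht⟩ d) (t + 1) i e ↔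
      availH O h t i e ∧ ((O ⟨t, ht⟩).2 = i → e ≠ d) := by
  constructor
  · intro H
    refine ⟨fun t' ht' hc => ?_, fun hc => ?_⟩
    · have hne : t' ≠ ⟨t, ht⟩ := Fin.ne_of_val_ne ht'.ne
      simpa [update_of_ne hne] using H t' (by omega) hc
    · simpa [eq_comm] using H ⟨t, ht⟩ (by simp) hc
  · rintro ⟨H, Hd⟩ t' ht' hc
    rcases eq_or_ne t' ⟨t, ht⟩ with rfl | hne
    · simpa [eq_comm] using Hd hc
    · rw [update_of_ne hne]
      have : (t' : ℕ) ≠ t := Fin.val_ne_of_ne hne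
      exact H t' (by omega) hc

noncomputable def availItems (O : Csam n p) (h : Fin (n * p) → Fin n) (t : ℕ) (i : Fin p) :
    Finset (Fin n) :=
  {d | availH O h t i d}

lemma availItems_update_succ (O : Csam n p) (h : Fin (n * p) → Fin n) {t : ℕ} (ht : t < n * p)
    (d : Fin n) (i : Fin p) :
    availItems O (update h ⟨t, ht⟩ d) (t + 1) i =
      if (O ⟨t, ht⟩).2 = i then (availItems O h t i).erase d else availItems O h t i := by
  ext e
  split_ifs with hi <;> simp [availItems, availH_update_succ, hi, and_comm]

noncomputable def pickersBetween (O : Csam n p) (t : ℕ) (j : Fin n) (i : Fin p) :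
    Finset (Fin n) :=
  {j' | t ≤ (O.symm (j', i) : ℕ) ∧ O.symm (j', i) < O.symm (j, i)}

lemma pickersBetween_succ (O : Csam n p) {t : ℕ} (ht : t < n * p) (j : Fin n) (i : Fin p) :
    pickersBetween O (t + 1) j i =
      if (O ⟨t, ht⟩).2 = i then (pickersBetween O t j i).erase (O ⟨t, ht⟩).1
      else pickersBetween O t j i := by
  ext j'
  have hτ := O.symm_val_eq_iff ht j' i
  split_ifs with hi
  · have : (O.symm (j', i) : ℕ) = t ↔ j' = (O ⟨t, ht⟩).1 := by
      rw [hτ, Prod.ext_iff, hi]; simp [eq_comm]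
    simp only [pickersBetween, mem_filter, mem_univ, true_and, mem_erase]
    omega
  · have : (O.symm (j', i) : ℕ) ≠ t := by rw [Ne, hτ]; exact fun h => hi (by rw [h])
    simp only [pickersBetween, mem_filter, mem_univ, true_and]
    omega

noncomputable def guaranteed (O : Csam n p) (h : Fin (n * p) → Fin n) (t : ℕ) (j : Fin n)
    (i : Fin p) : ℕ :=
  #(availItems O h t i) - #(pickersBetween O t j i)

lemma guaranteed_update_succ (O : Csam n p) (h : Fin (n * p) → Fin n) {t : ℕ} (ht : t < n * p)
    {j : Fin n} {i : Fin p} (hti : t < O.symm (j, i)) {e : Fin n}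
    (he : availH O h t (O ⟨t, ht⟩).2 e) :
    guaranteed O (update h ⟨t, ht⟩ e) (t + 1) j i = guaranteed O h t j i := by
  unfold guaranteed
  rw [availItems_update_succ, pickersBetween_succ O ht]
  split_ifs with hi
  · subst hi
    have he' : e ∈ availItems O h t (O ⟨t, ht⟩).2 := by simpa [availItems] using he
    have hmover : (O ⟨t, ht⟩).1 ∈ pickersBetween O t j (O ⟨t, ht⟩).2 := by
      have hself : O.symm ((O ⟨t, ht⟩).1, (O ⟨t, ht⟩).2) = ⟨t, ht⟩ := by simp
      simp only [pickersBetween, mem_filter, mem_univ, true_and, hself]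
      exact ⟨le_rfl, hti⟩
    rw [card_erase_of_mem he', card_erase_of_mem hmover]
    have := card_pos.2 ⟨_, he'⟩
    have := card_pos.2 ⟨_, hmover⟩
    omega
  · rfl

lemma guaranteed_of_symm_eq (O : Csam n p) (h : Fin (n * p) → Fin n) {t : ℕ} {j : Fin n}
    {i : Fin p} (hτ : (O.symm (j, i) : ℕ) = t) :
    guaranteed O h t j i = #(availItems O h t i) := by
  have hnone : pickersBetween O t j i = ∅ := by
    refine filter_false_of_mem fun j' _ => ?_
    rw [Fin.lt_def, hτ]
    omega
  rw [guaranteed, hnone, card_empty, Nat.sub_zero]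

lemma guaranteed_zero (O : Csam n p) (h : Fin (n * p) → Fin n) (j : Fin n) (i : Fin p) :
    guaranteed O h 0 j i = kval O j i := by
  have hsplit := card_filter_lt_add_card_filter_gt
    (O.symm.injective.comp (Prod.mk_left_injective i)) j
  have havail : availItems O h 0 i = univ := by simp [availItems, availH]
  simp only [comp_apply, Fintype.card_fin] at hsplit
  simp only [guaranteed, havail, pickersBetween, kval, zero_le, true_and, card_univ,
    Fintype.card_fin]
  omega

noncomputable def remainingCats (O : Csam n p) (t : ℕ) (j : Fin n) : Finset (Fin p) :=
  {i | t ≤ (O.symm (j, i) : ℕ)}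

lemma remainingCats_zero (O : Csam n p) (j : Fin n) : remainingCats O 0 j = univ := by
  simp [remainingCats]

lemma remainingCats_eq_empty (O : Csam n p) {t : ℕ} (ht : n * p ≤ t) (j : Fin n) :
    remainingCats O t j = ∅ :=
  filter_false_of_mem fun i _ => not_le.2 ((O.symm (j, i)).isLt.trans_le ht)

lemma remainingCats_succ_of_ne (O : Csam n p) {t : ℕ} (ht : t < n * p) {j : Fin n}
    (hj : (O ⟨t, ht⟩).1 ≠ j) : remainingCats O (t + 1) j = remainingCats O t j := by
  ext i
  have : (O.symm (j, i) : ℕ) ≠ t := by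
    rw [Ne, O.symm_val_eq_iff ht]
    exact fun h => hj (by rw [h])
  simp only [remainingCats, mem_filter, mem_univ, true_and]
  omega

lemma remainingCats_eq_insert_of_apply_eq (O : Csam n p) {t : ℕ} (ht : t < n * p) {j : Fin n}
    {i₀ : Fin p} (hO : O ⟨t, ht⟩ = (j, i₀)) :
    remainingCats O t j = insert i₀ (remainingCats O (t + 1) j) := by
  ext i
  have : (O.symm (j, i) : ℕ) = t ↔ i = i₀ := by
    rw [O.symm_val_eq_iff ht, hO, Prod.ext_iff]
    simp [eq_comm]
  simp only [remainingCats, mem_filter, mem_univ, true_and, mem_insert]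
  omega

lemma not_mem_remainingCats_succ_of_apply_eq (O : Csam n p) {t : ℕ} (ht : t < n * p)
    {j : Fin n} {i₀ : Fin p} (hO : O ⟨t, ht⟩ = (j, i₀)) :
    i₀ ∉ remainingCats O (t + 1) j := by
  have := (O.symm_val_eq_iff ht j i₀).2 hO
  simp only [remainingCats, mem_filter, mem_univ, true_and]
  omega

lemma prod_guaranteed_update_succ (O : Csam n p) (h : Fin (n * p) → Fin n) {t : ℕ}
    (ht : t < n * p) (j : Fin n) {e : Fin n} (he : availH O h t (O ⟨t, ht⟩).2 e) :
    ∏ i ∈ remainingCats O (t + 1) j, guaranteed O (update h ⟨t, ht⟩ e) (t + 1) j i =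
      ∏ i ∈ remainingCats O (t + 1) j, guaranteed O h t j i :=
  prod_congr rfl fun _ hi => guaranteed_update_succ O h ht (by simpa [remainingCats] using hi) he

def AgreesWithPicks (O : Csam n p) (h : Fin (n * p) → Fin n) (t : ℕ) (j : Fin n)
    (c : Bundle n p) : Prop :=
  ∀ i, (O.symm (j, i) : ℕ) < t → c i = h (O.symm (j, i))

lemma agreesWithPicks_update_succ_iff (O : Csam n p) (h : Fin (n * p) → Fin n) {t : ℕ}
    (ht : t < n * p) (d : Fin n) (j : Fin n) (c : Bundle n p) :
    AgreesWithPicks O (update h ⟨t, ht⟩ d) (t + 1) j c ↔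
      AgreesWithPicks O h t j c ∧ ((O ⟨t, ht⟩).1 = j → c (O ⟨t, ht⟩).2 = d) := by
  have hτ : ∀ i, O.symm (j, i) = ⟨t, ht⟩ ↔ O ⟨t, ht⟩ = (j, i) := fun i => by
    rw [Equiv.symm_apply_eq, eq_comm]
  constructor
  · intro H
    refine ⟨fun i hi => ?_, fun hj => ?_⟩
    · have hne : O.symm (j, i) ≠ ⟨t, ht⟩ := Fin.ne_of_val_ne hi.ne
      simpa [update_of_ne hne] using H i (by omega)
    · have hself : O.symm (j, (O ⟨t, ht⟩).2) = ⟨t, ht⟩ := (hτ _).2 (by rw [← hj])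
      simpa [hself] using H (O ⟨t, ht⟩).2 (by rw [hself]; exact t.lt_succ_self)
  · rintro ⟨H, Hd⟩ i hi
    by_cases hi' : O.symm (j, i) = ⟨t, ht⟩
    · rw [hi', update_self]
      obtain ⟨rfl, rfl⟩ := Prod.ext_iff.1 ((hτ i).1 hi')
      exact Hd rfl
    · rw [update_of_ne hi']
      have : (O.symm (j, i) : ℕ) ≠ t := Fin.val_ne_of_ne hi'
      exact H i (by omega)

noncomputable def notPreferred (O : Csam n p) (P : Profile n p)
    (F : ℕ → (Fin (n * p) → Fin n) → Fin n → Bundle n p) (t : ℕ) (h : Fin (n * p) → Fin n)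
    (j : Fin n) : Finset (Bundle n p) :=
  {c | AgreesWithPicks O h t j c ∧ ¬ P j c (F t h j)}

section Subgame

variable {O : Csam n p} {P : Profile n p} {F : ℕ → (Fin (n * p) → Fin n) → Fin n → Bundle n p}

lemma outcome_mem_notPreferred_of_leaf {j : Fin n} (hP : Std.Irrefl (P j))
    (hF : BIOutcome O P F) (h : Fin (n * p) → Fin n) :
    F (n * p) h j ∈ notPreferred O P F (n * p) h j := by
  simp only [notPreferred, mem_filter, mem_univ, true_and]
  exact ⟨fun i _ => hF.1 h j i, hP.irrefl _⟩

lemma notPreferred_update_succ_of_ne {t : ℕ} (ht : t < n * p) {h : Fin (n * p) → Fin n}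
    {d : Fin n} (hFd : F t h = F (t + 1) (update h ⟨t, ht⟩ d)) {j : Fin n}
    (hj : (O ⟨t, ht⟩).1 ≠ j) :
    notPreferred O P F (t + 1) (update h ⟨t, ht⟩ d) j = notPreferred O P F t h j := by
  ext c
  simp [notPreferred, agreesWithPicks_update_succ_iff, hj, hFd]

lemma notPreferred_update_succ_subset {j : Fin n} (hP : IsTrans (Bundle n p) (P j)) {t : ℕ}
    (ht : t < n * p) {h : Fin (n * p) → Fin n} {i₀ : Fin p}
    (hO : O ⟨t, ht⟩ = (j, i₀)) {e : Fin n}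
    (hpref : F (t + 1) (update h ⟨t, ht⟩ e) j = F t h j ∨
      P j (F t h j) (F (t + 1) (update h ⟨t, ht⟩ e) j)) :
    notPreferred O P F (t + 1) (update h ⟨t, ht⟩ e) j ⊆
      {c ∈ notPreferred O P F t h j | c i₀ = e} := by
  intro c hc
  simp only [notPreferred, mem_filter, mem_univ, true_and, agreesWithPicks_update_succ_iff,
    hO, true_implies] at hc ⊢
  obtain ⟨⟨hagree, hce⟩, hc⟩ := hc
  refine ⟨⟨hagree, fun hcF => hc ?_⟩, hce⟩
  rcases hpref with heq | hlt
  · rwa [heq]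
  · exact hP.trans _ _ _ hcF hlt

lemma BIOutcome.eq_or_prefers_of_availH (hF : BIOutcome O P F) {t : ℕ} (ht : t < n * p)
    (h : Fin (n * p) → Fin n) {e : Fin n} (he : availH O h t (O ⟨t, ht⟩).2 e) :
    F (t + 1) (update h ⟨t, ht⟩ e) (O ⟨t, ht⟩).1 = F t h (O ⟨t, ht⟩).1 ∨
      P (O ⟨t, ht⟩).1 (F t h (O ⟨t, ht⟩).1) (F (t + 1) (update h ⟨t, ht⟩ e) (O ⟨t, ht⟩).1) := by
  obtain ⟨d, -, hFd, hbest⟩ := hF.2 t ht h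
  rw [hFd]
  rcases eq_or_ne e d with rfl | hne
  · exact Or.inl rfl
  · exact (hbest e he hne).imp Eq.symm id

theorem prod_guaranteed_le_card_notPreferred (hP : ∀ j, IsStrictOrder (Bundle n p) (P j))
    (hF : BIOutcome O P F) {t : ℕ} (ht : t ≤ n * p) (h : Fin (n * p) → Fin n) (j : Fin n) :
    ∏ i ∈ remainingCats O t j, guaranteed O h t j i ≤ #(notPreferred O P F t h j) := by
  induction ht using Nat.decreasingInduction generalizing h j with
  | self =>
    rw [remainingCats_eq_empty O le_rfl, prod_empty]
    exact card_pos.2 ⟨_, outcome_mem_notPreferred_of_leaf (hP j).toIrrefl hF h⟩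
  | of_succ t ht ih =>
    by_cases hj : (O ⟨t, ht⟩).1 = j
    · set i₀ := (O ⟨t, ht⟩).2
      have hO : O ⟨t, ht⟩ = (j, i₀) := by rw [← hj]
      rw [remainingCats_eq_insert_of_apply_eq O ht hO,
        prod_insert (not_mem_remainingCats_succ_of_apply_eq O ht hO),
        guaranteed_of_symm_eq O h ((O.symm_val_eq_iff ht j i₀).2 hO)]
      refine card_mul_le_card_of_le_card_fiber (f := fun c => c i₀) fun e he => ?_
      replace he : availH O h t i₀ e := by simpa [availItems] using he
      have hpref := hF.eq_or_prefers_of_availH ht h he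
      rw [hj] at hpref
      calc ∏ i ∈ remainingCats O (t + 1) j, guaranteed O h t j i
          = ∏ i ∈ remainingCats O (t + 1) j, guaranteed O (update h ⟨t, ht⟩ e) (t + 1) j i :=
            (prod_guaranteed_update_succ O h ht j he).symm
        _ ≤ #(notPreferred O P F (t + 1) (update h ⟨t, ht⟩ e) j) := ih _ _
        _ ≤ _ := card_le_card <|
            notPreferred_update_succ_subset (hP j).toIsTrans ht hO hpref
    · obtain ⟨d, hd, hFd, -⟩ := hF.2 t ht h
      rw [← notPreferred_update_succ_of_ne ht hFd hj, ← remainingCats_succ_of_ne O ht hj,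
        ← prod_guaranteed_update_succ O h ht j hd]
      exact ih _ _

end Subgame

end BackwardInduction

theorem statement17_general (n p : ℕ) (O : Csam n p)
    (P : Profile n p) (hP : ValidProfile P)
    (F : ℕ → (Fin (n * p) → Fin n) → Fin n → Bundle n p)
    (hF : BIOutcome O P F)
    (h0 : Fin (n * p) → Fin n) (j : Fin n) :
    rank (P j) (F 0 h0 j) ≤ n ^ p + 1 - ∏ i : Fin p, kval O j i := by
  have key := prod_guaranteed_le_card_notPreferred (fun j => (hP j).toIsStrictOrder) hF
    (Nat.zero_le _) h0 j
  have hroot : notPreferred O P F 0 h0 j = ({c | ¬ P j c (F 0 h0 j)} : Finset _) := by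
    simp [notPreferred, AgreesWithPicks]
  rw [hroot] at key
  simp only [remainingCats_zero, guaranteed_zero] at key
  have := rank_add_card_filter_not (P j) (F 0 h0 j)
  omega

theorem statement17 (n p : ℕ) (hn : 0 < n) (hp : 0 < p) (O : Csam n p)
    (P : Profile n p) (hP : ValidProfile P)
    (F : ℕ → (Fin (n * p) → Fin n) → Fin n → Bundle n p)
    (hF : BIOutcome O P F)
    (h0 : Fin (n * p) → Fin n) (j : Fin n) :
    rank (P j) (F 0 h0 j) ≤ n ^ p + 1 - ∏ i : Fin p, kval O j i :=
  statement17_general n p O P hP F hF h0 j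
end
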